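/- If D(M_1,M_2) is disconnected with a disconnection [n] = S ⊔ T (i.e., D(M_1,M_2) = D(M_1,M_2)|S ⊕ D(M_1,M_2)|T), then the external activity complex factors as a simplicial join: Δ_w(M_1,M_2) = Δ_{w_S}(M_1|S,M_2|S) * Δ_{w_T}(M_1|T,M_2|T), where w_S and w_T are the restrictions of the weight vector w to the coordinates indexed by S and T. -/
import Mathlib


open Finset

/-- A matroid on the ground set `Fin n`, presented by its rank function. -/
structure FinMatroid (n : ℕ) where
  rank : Finset (Fin n) → ℕ
  rank_empty : rank ∅ = 0
  rank_le_card : ∀ S : Finset (Fin n), rank S ≤ S.card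
  rank_mono : ∀ ⦃S T : Finset (Fin n)⦄, S ⊆ T → rank S ≤ rank T
  rank_submod : ∀ S T : Finset (Fin n),
    rank (S ∪ T) + rank (S ∩ T) ≤ rank S + rank T

namespace FinMatroid

variable {n : ℕ}

/-- A set is independent if its rank equals its cardinality. -/
def Indep (M : FinMatroid n) (I : Finset (Fin n)) : Prop := M.rank I = I.card

/-- The rank of the matroid (rank of the full ground set). -/
def rk (M : FinMatroid n) : ℕ := M.rank Finset.univ

/-- A matroid is loopless if every singleton has positive rank. -/
def Loopless (M : FinMatroid n) : Prop := ∀ i : Fin n, 0 < M.rank {i}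

/-- Two matroids on `[n]` have no common loops. -/
def NoCommonLoops (M₁ M₂ : FinMatroid n) : Prop :=
  ∀ i : Fin n, 0 < M₁.rank {i} ∨ 0 < M₂.rank {i}

/-- A valid family for the Dilworth minimum: pairwise disjoint nonempty
subsets of `S`. -/
def ValidFamily (S : Finset (Fin n)) (𝒯 : Finset (Finset (Fin n))) : Prop :=
  (∀ T ∈ 𝒯, T ⊆ S ∧ T.Nonempty) ∧
    ∀ T ∈ 𝒯, ∀ T' ∈ 𝒯, T ≠ T' → Disjoint T T'

/-- The value `Σ_i (rank_{M₁}(T_i) + rank_{M₂}(T_i) − 1) + |S \ ∪ T_i|`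
associated to a family. -/
def famValue (M₁ M₂ : FinMatroid n) (S : Finset (Fin n))
    (𝒯 : Finset (Finset (Fin n))) : ℕ :=
  (∑ T ∈ 𝒯, (M₁.rank T + M₂.rank T - 1)) + (S \ 𝒯.sup id).card

/-- The rank function of the diagonal Dilworth truncation `D(M₁,M₂)`. -/
noncomputable def rankD (M₁ M₂ : FinMatroid n) (S : Finset (Fin n)) : ℕ :=
  sInf {v : ℕ | ∃ 𝒯 : Finset (Finset (Fin n)),
    ValidFamily S 𝒯 ∧ v = famValue M₁ M₂ S 𝒯}

/-- Independence in the diagonal Dilworth truncation. -/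
def IndepD (M₁ M₂ : FinMatroid n) (I : Finset (Fin n)) : Prop :=
  rankD M₁ M₂ I = I.card

/-- Circuits of the diagonal Dilworth truncation: minimal dependent sets. -/
def CircuitD (M₁ M₂ : FinMatroid n) (C : Finset (Fin n)) : Prop :=
  ¬ IndepD M₁ M₂ C ∧ ∀ C' : Finset (Fin n), C' ⊂ C → IndepD M₁ M₂ C'

end FinMatroid

namespace FinMatroid

variable {n : ℕ}

/-- A decomposition of `C` into disjoint sets independent in `M₁` and `M₂`
respectively. -/
def Decomp (M₁ M₂ : FinMatroid n) (C I₁ I₂ : Finset (Fin n)) : Prop :=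
  Disjoint I₁ I₂ ∧ I₁ ∪ I₂ = C ∧ M₁.Indep I₁ ∧ M₂.Indep I₂

/-- The `w`-weight of the monomial `y_{I₁} x_{I₂}`. -/
def wtD (wx wy : Fin n → ℝ) (I₁ I₂ : Finset (Fin n)) : ℝ :=
  (∑ i ∈ I₁, wy i) + (∑ i ∈ I₂, wx i)

/-- The `w`-initial decomposition of a circuit: a decomposition of maximal
`w`-weight. -/
def InitialDecomp (M₁ M₂ : FinMatroid n) (wx wy : Fin n → ℝ)
    (C I₁ I₂ : Finset (Fin n)) : Prop :=
  Decomp M₁ M₂ C I₁ I₂ ∧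
    ∀ J₁ J₂ : Finset (Fin n), Decomp M₁ M₂ C J₁ J₂ →
      wtD wx wy J₁ J₂ ≤ wtD wx wy I₁ I₂

/-- `C` is the fundamental circuit of `i` with respect to `B` in `D(M₁,M₂)`. -/
def FundCircuitD (M₁ M₂ : FinMatroid n) (B : Finset (Fin n)) (i : Fin n)
    (C : Finset (Fin n)) : Prop :=
  CircuitD M₁ M₂ C ∧ C ⊆ insert i B ∧ i ∈ C

/-- `i` is externally 1-active for `B` (lies in the `M₁`-part of the
`w`-initial decomposition of its fundamental circuit). -/
def ExtActive1 (M₁ M₂ : FinMatroid n) (wx wy : Fin n → ℝ)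
    (B : Finset (Fin n)) (i : Fin n) : Prop :=
  ∃ C I₁ I₂ : Finset (Fin n), FundCircuitD M₁ M₂ B i C ∧
    InitialDecomp M₁ M₂ wx wy C I₁ I₂ ∧ i ∈ I₁

/-- `i` is externally 2-active for `B`. -/
def ExtActive2 (M₁ M₂ : FinMatroid n) (wx wy : Fin n → ℝ)
    (B : Finset (Fin n)) (i : Fin n) : Prop :=
  ∃ C I₁ I₂ : Finset (Fin n), FundCircuitD M₁ M₂ B i C ∧
    InitialDecomp M₁ M₂ wx wy C I₁ I₂ ∧ i ∈ I₂

/-- `B` is a basis of the restriction of `D(M₁,M₂)` to the ground set `E`. -/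
def BasisOn (M₁ M₂ : FinMatroid n) (E B : Finset (Fin n)) : Prop :=
  B ⊆ E ∧ rankD M₁ M₂ B = B.card ∧ rankD M₁ M₂ B = rankD M₁ M₂ E

/-- `F` is a facet of the external activity complex `Δ_w(M₁|E, M₂|E)`:
`F = {x_j : j ∈ B ∪ E₁(B)} ∪ {y_j : j ∈ B ∪ E₂(B)}` for a basis `B`, where
`x`-vertices are encoded as `Sum.inl` and `y`-vertices as `Sum.inr`. -/
def IsFacetOn (M₁ M₂ : FinMatroid n) (wx wy : Fin n → ℝ)
    (E : Finset (Fin n)) (F : Finset (Fin n ⊕ Fin n)) : Prop :=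
  ∃ B E₁ E₂ : Finset (Fin n), BasisOn M₁ M₂ E B ∧
    (∀ i : Fin n, i ∈ E₁ ↔ i ∈ E ∧ i ∉ B ∧ ExtActive1 M₁ M₂ wx wy B i) ∧
    (∀ i : Fin n, i ∈ E₂ ↔ i ∈ E ∧ i ∉ B ∧ ExtActive2 M₁ M₂ wx wy B i) ∧
    F = ((B ∪ E₁).image Sum.inl) ∪ ((B ∪ E₂).image Sum.inr)

/-- The weight vector `w = (w_x, w_y)` is generic: its `2n` entries are
linearly independent over `ℚ`. -/
def Generic (wx wy : Fin n → ℝ) : Prop :=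
  LinearIndependent ℚ (Sum.elim wx wy)

end FinMatroid

namespace FinMatroid

variable {n : ℕ}

lemma validFamily_empty (S : Finset (Fin n)) :
    ValidFamily S (∅ : Finset (Finset (Fin n))) :=
  ⟨fun T hT => absurd hT (Finset.notMem_empty T),
   fun T hT => absurd hT (Finset.notMem_empty T)⟩

lemma rankD_le_card (M₁ M₂ : FinMatroid n) (X : Finset (Fin n)) :
    rankD M₁ M₂ X ≤ X.card := by
  have : X.card ∈ {v : ℕ | ∃ 𝒯, ValidFamily X 𝒯 ∧ v = famValue M₁ M₂ X 𝒯} :=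
    ⟨∅, validFamily_empty X, by simp [famValue]⟩
  exact Nat.sInf_le this

lemma rankD_exists (M₁ M₂ : FinMatroid n) (X : Finset (Fin n)) :
    ∃ 𝒯, ValidFamily X 𝒯 ∧ rankD M₁ M₂ X = famValue M₁ M₂ X 𝒯 := by
  have hne : {v : ℕ | ∃ 𝒯, ValidFamily X 𝒯 ∧ v = famValue M₁ M₂ X 𝒯}.Nonempty :=
    ⟨famValue M₁ M₂ X ∅, ∅, validFamily_empty X, rfl⟩
  exact Nat.sInf_mem hne

lemma rankD_mono (M₁ M₂ : FinMatroid n) {X Y : Finset (Fin n)} (hXY : X ⊆ Y) :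
    rankD M₁ M₂ X ≤ rankD M₁ M₂ Y := by
  obtain ⟨𝒯, h𝒯, heq⟩ := rankD_exists M₁ M₂ Y
  set 𝒯f := 𝒯.filter (fun T => (T ∩ X).Nonempty) with h𝒯f
  set 𝒯' := 𝒯f.image (· ∩ X) with h𝒯'
  have hinj : ∀ A ∈ 𝒯f, ∀ A' ∈ 𝒯f, A ∩ X = A' ∩ X → A = A' := by
    intro A hA A' hA' hEq
    by_contra hne
    rw [h𝒯f, Finset.mem_filter] at hA hA'
    obtain ⟨a, ha⟩ := hA.2
    have hd := h𝒯.2 A hA.1 A' hA'.1 hne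
    have ha' : a ∈ A' ∩ X := hEq ▸ ha
    exact (Finset.disjoint_left.mp hd (Finset.mem_inter.mp ha).1)
      (Finset.mem_inter.mp ha').1
  have hvalid : ValidFamily X 𝒯' := by
    constructor
    · intro A hA
      obtain ⟨B, hB, rfl⟩ := Finset.mem_image.mp hA
      exact ⟨Finset.inter_subset_right, (Finset.mem_filter.mp hB).2⟩
    · intro A hA A' hA' hne
      obtain ⟨B, hB, rfl⟩ := Finset.mem_image.mp hA
      obtain ⟨B', hB', rfl⟩ := Finset.mem_image.mp hA'
      have hBB : B ≠ B' := fun hh => hne (by rw [hh])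
      exact (h𝒯.2 B (Finset.mem_filter.mp hB).1 B' (Finset.mem_filter.mp hB').1
        hBB).mono Finset.inter_subset_left Finset.inter_subset_left
  have hsum : ∑ A ∈ 𝒯', (M₁.rank A + M₂.rank A - 1) ≤
      ∑ A ∈ 𝒯, (M₁.rank A + M₂.rank A - 1) := by
    rw [h𝒯', Finset.sum_image hinj]
    calc ∑ A ∈ 𝒯f, (M₁.rank (A ∩ X) + M₂.rank (A ∩ X) - 1)
        ≤ ∑ A ∈ 𝒯f, (M₁.rank A + M₂.rank A - 1) := by
          refine Finset.sum_le_sum fun A _ => Nat.sub_le_sub_right ?_ 1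
          exact add_le_add (M₁.rank_mono Finset.inter_subset_left)
            (M₂.rank_mono Finset.inter_subset_left)
      _ ≤ _ := Finset.sum_le_sum_of_subset (Finset.filter_subset _ _)
  have hsd : X \ 𝒯'.sup id ⊆ Y \ 𝒯.sup id := by
    intro a ha
    rw [Finset.mem_sdiff] at ha ⊢
    refine ⟨hXY ha.1, fun hmem => ha.2 ?_⟩
    rw [Finset.mem_sup] at hmem ⊢
    obtain ⟨A, hA, haA⟩ := hmem
    refine ⟨A ∩ X, Finset.mem_image.mpr ⟨A, Finset.mem_filter.mpr
      ⟨hA, ⟨a, Finset.mem_inter.mpr ⟨haA, ha.1⟩⟩⟩, rfl⟩,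
      Finset.mem_inter.mpr ⟨haA, ha.1⟩⟩
  have hle : famValue M₁ M₂ X 𝒯' ≤ famValue M₁ M₂ Y 𝒯 :=
    add_le_add hsum (Finset.card_le_card hsd)
  have h1 : rankD M₁ M₂ X ≤ famValue M₁ M₂ X 𝒯' :=
    Nat.sInf_le ⟨𝒯', hvalid, rfl⟩
  omega

lemma circuit_subset (M₁ M₂ : FinMatroid n) {S T : Finset (Fin n)}
    (hdisj : Disjoint S T) (hcover : S ∪ T = Finset.univ)
    (hsep : ∀ A : Finset (Fin n),
      rankD M₁ M₂ A = rankD M₁ M₂ (A ∩ S) + rankD M₁ M₂ (A ∩ T))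
    {C : Finset (Fin n)} (hC : CircuitD M₁ M₂ C) : C ⊆ S ∨ C ⊆ T := by
  by_contra hcon
  push_neg at hcon
  obtain ⟨hnS, hnT⟩ := hcon
  obtain ⟨t, htC, htS⟩ := Finset.not_subset.mp hnS
  obtain ⟨s, hsC, hsT⟩ := Finset.not_subset.mp hnT
  have hmem : ∀ a : Fin n, a ∈ S ∨ a ∈ T := by
    intro a
    have := Finset.mem_univ a
    rw [← hcover, Finset.mem_union] at this
    exact this
  have h1 : C ∩ S ⊂ C := by
    refine Finset.ssubset_iff_subset_ne.mpr ⟨Finset.inter_subset_left, fun hh => ?_⟩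
    have : t ∈ C ∩ S := by rw [hh]; exact htC
    exact htS (Finset.mem_inter.mp this).2
  have h2 : C ∩ T ⊂ C := by
    refine Finset.ssubset_iff_subset_ne.mpr ⟨Finset.inter_subset_left, fun hh => ?_⟩
    have : s ∈ C ∩ T := by rw [hh]; exact hsC
    exact hsT (Finset.mem_inter.mp this).2
  have i1 := hC.2 _ h1
  have i2 := hC.2 _ h2
  have hcard : (C ∩ S).card + (C ∩ T).card = C.card := by
    rw [← Finset.card_union_of_disjoint
      (hdisj.mono Finset.inter_subset_right Finset.inter_subset_right),
      ← Finset.inter_union_distrib_left, hcover, Finset.inter_univ]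
  have hsC' := hsep C
  unfold IndepD at i1 i2
  exact hC.1 (by unfold IndepD; omega)

lemma fundCircuitD_inter (M₁ M₂ : FinMatroid n) {S T : Finset (Fin n)}
    (hdisj : Disjoint S T) (hcover : S ∪ T = Finset.univ)
    (hsep : ∀ A : Finset (Fin n),
      rankD M₁ M₂ A = rankD M₁ M₂ (A ∩ S) + rankD M₁ M₂ (A ∩ T))
    {B C : Finset (Fin n)} {i : Fin n} (hiS : i ∈ S) :
    FundCircuitD M₁ M₂ B i C ↔ FundCircuitD M₁ M₂ (B ∩ S) i C := by
  constructor
  · rintro ⟨hcirc, hsub, hiC⟩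
    refine ⟨hcirc, ?_, hiC⟩
    have hCS : C ⊆ S := by
      rcases circuit_subset M₁ M₂ hdisj hcover hsep hcirc with hh | hh
      · exact hh
      · exact absurd hiS (Finset.disjoint_right.mp hdisj (hh hiC))
    intro a haC
    have := hsub haC
    rw [Finset.mem_insert] at this ⊢
    rcases this with rfl | hB
    · exact Or.inl rfl
    · exact Or.inr (Finset.mem_inter.mpr ⟨hB, hCS haC⟩)
  · rintro ⟨hcirc, hsub, hiC⟩
    exact ⟨hcirc, hsub.trans (Finset.insert_subset_insert _ Finset.inter_subset_left), hiC⟩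

lemma extActive1_inter (M₁ M₂ : FinMatroid n) (wx wy : Fin n → ℝ)
    {S T : Finset (Fin n)}
    (hdisj : Disjoint S T) (hcover : S ∪ T = Finset.univ)
    (hsep : ∀ A : Finset (Fin n),
      rankD M₁ M₂ A = rankD M₁ M₂ (A ∩ S) + rankD M₁ M₂ (A ∩ T))
    {B : Finset (Fin n)} {i : Fin n} (hiS : i ∈ S) :
    ExtActive1 M₁ M₂ wx wy B i ↔ ExtActive1 M₁ M₂ wx wy (B ∩ S) i := by
  unfold ExtActive1
  refine exists_congr fun C => exists_congr fun I₁ => exists_congr fun I₂ => ?_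
  rw [fundCircuitD_inter M₁ M₂ hdisj hcover hsep hiS]

lemma extActive2_inter (M₁ M₂ : FinMatroid n) (wx wy : Fin n → ℝ)
    {S T : Finset (Fin n)}
    (hdisj : Disjoint S T) (hcover : S ∪ T = Finset.univ)
    (hsep : ∀ A : Finset (Fin n),
      rankD M₁ M₂ A = rankD M₁ M₂ (A ∩ S) + rankD M₁ M₂ (A ∩ T))
    {B : Finset (Fin n)} {i : Fin n} (hiS : i ∈ S) :
    ExtActive2 M₁ M₂ wx wy B i ↔ ExtActive2 M₁ M₂ wx wy (B ∩ S) i := by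
  unfold ExtActive2
  refine exists_congr fun C => exists_congr fun I₁ => exists_congr fun I₂ => ?_
  rw [fundCircuitD_inter M₁ M₂ hdisj hcover hsep hiS]

lemma basisOn_inter (M₁ M₂ : FinMatroid n) {S T : Finset (Fin n)}
    (hdisj : Disjoint S T) (hcover : S ∪ T = Finset.univ)
    (hsep : ∀ A : Finset (Fin n),
      rankD M₁ M₂ A = rankD M₁ M₂ (A ∩ S) + rankD M₁ M₂ (A ∩ T))
    {B : Finset (Fin n)} (hB : BasisOn M₁ M₂ Finset.univ B) :
    BasisOn M₁ M₂ S (B ∩ S) := by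
  obtain ⟨-, hrB, hrU⟩ := hB
  have h1 := hsep B
  have h2 := hsep Finset.univ
  rw [Finset.univ_inter, Finset.univ_inter] at h2
  have hcS : rankD M₁ M₂ (B ∩ S) ≤ (B ∩ S).card := rankD_le_card M₁ M₂ _
  have hcT : rankD M₁ M₂ (B ∩ T) ≤ (B ∩ T).card := rankD_le_card M₁ M₂ _
  have hmS : rankD M₁ M₂ (B ∩ S) ≤ rankD M₁ M₂ S :=
    rankD_mono M₁ M₂ Finset.inter_subset_right
  have hmT : rankD M₁ M₂ (B ∩ T) ≤ rankD M₁ M₂ T :=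
    rankD_mono M₁ M₂ Finset.inter_subset_right
  have hcard : (B ∩ S).card + (B ∩ T).card = B.card := by
    rw [← Finset.card_union_of_disjoint
      (hdisj.mono Finset.inter_subset_right Finset.inter_subset_right),
      ← Finset.inter_union_distrib_left, hcover, Finset.inter_univ]
  exact ⟨Finset.inter_subset_right, by omega, by omega⟩

lemma basisOn_union (M₁ M₂ : FinMatroid n) {S T : Finset (Fin n)}
    (hdisj : Disjoint S T) (hcover : S ∪ T = Finset.univ)
    (hsep : ∀ A : Finset (Fin n),
      rankD M₁ M₂ A = rankD M₁ M₂ (A ∩ S) + rankD M₁ M₂ (A ∩ T))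
    {B_S B_T : Finset (Fin n)} (hS : BasisOn M₁ M₂ S B_S)
    (hT : BasisOn M₁ M₂ T B_T) :
    BasisOn M₁ M₂ Finset.univ (B_S ∪ B_T) := by
  obtain ⟨hsubS, hrS, heS⟩ := hS
  obtain ⟨hsubT, hrT, heT⟩ := hT
  have hd : Disjoint B_S B_T := hdisj.mono hsubS hsubT
  have hBS : (B_S ∪ B_T) ∩ S = B_S := by
    rw [Finset.union_inter_distrib_right, Finset.inter_eq_left.mpr hsubS,
      Finset.disjoint_iff_inter_eq_empty.mp (hdisj.symm.mono_left hsubT),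
      Finset.union_empty]
  have hBT : (B_S ∪ B_T) ∩ T = B_T := by
    rw [Finset.union_inter_distrib_right, Finset.inter_eq_left.mpr hsubT,
      Finset.disjoint_iff_inter_eq_empty.mp (hdisj.mono_left hsubS),
      Finset.empty_union]
  have h1 := hsep (B_S ∪ B_T)
  rw [hBS, hBT] at h1
  have h2 := hsep Finset.univ
  rw [Finset.univ_inter, Finset.univ_inter] at h2
  have hcard : (B_S ∪ B_T).card = B_S.card + B_T.card :=
    Finset.card_union_of_disjoint hd
  exact ⟨Finset.subset_univ _, by omega, by omega⟩

end FinMatroid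

open FinMatroid in
/-- If `[n] = S ⊔ T` is a disconnection of `D(M₁,M₂)`, then
`Δ_w(M₁,M₂) = Δ_{w_S}(M₁|S,M₂|S) * Δ_{w_T}(M₁|T,M₂|T)`: the facets of
`Δ_w(M₁,M₂)` are exactly the unions of a facet of each restricted complex. -/
theorem externalActivityComplex_join (n : ℕ) (M₁ M₂ : FinMatroid n)
    (h : NoCommonLoops M₁ M₂) (wx wy : Fin n → ℝ) (hw : Generic wx wy)
    (S T : Finset (Fin n)) (hdisj : Disjoint S T)
    (hcover : S ∪ T = Finset.univ)
    (hsep : ∀ A : Finset (Fin n),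
      rankD M₁ M₂ A = rankD M₁ M₂ (A ∩ S) + rankD M₁ M₂ (A ∩ T)) :
    ∀ F : Finset (Fin n ⊕ Fin n),
      IsFacetOn M₁ M₂ wx wy Finset.univ F ↔
        ∃ F_S F_T : Finset (Fin n ⊕ Fin n),
          IsFacetOn M₁ M₂ wx wy S F_S ∧ IsFacetOn M₁ M₂ wx wy T F_T ∧
          F = F_S ∪ F_T := by
  have hcover' : T ∪ S = Finset.univ := by rw [Finset.union_comm]; exact hcover
  have hsep' : ∀ A : Finset (Fin n),
      rankD M₁ M₂ A = rankD M₁ M₂ (A ∩ T) + rankD M₁ M₂ (A ∩ S) := fun A => by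
    rw [hsep A]; omega
  have hmem : ∀ a : Fin n, a ∈ S ∨ a ∈ T := by
    intro a
    have := Finset.mem_univ a
    rw [← hcover, Finset.mem_union] at this
    exact this
  intro F
  constructor
  · rintro ⟨B, E₁, E₂, hB, hE₁, hE₂, rfl⟩
    refine ⟨((B ∩ S ∪ E₁ ∩ S).image Sum.inl) ∪ ((B ∩ S ∪ E₂ ∩ S).image Sum.inr),
            ((B ∩ T ∪ E₁ ∩ T).image Sum.inl) ∪ ((B ∩ T ∪ E₂ ∩ T).image Sum.inr),
            ⟨B ∩ S, E₁ ∩ S, E₂ ∩ S, basisOn_inter M₁ M₂ hdisj hcover hsep hB,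
              ?_, ?_, rfl⟩,
            ⟨B ∩ T, E₁ ∩ T, E₂ ∩ T, basisOn_inter M₁ M₂ hdisj.symm hcover' hsep' hB,
              ?_, ?_, rfl⟩, ?_⟩
    · intro i
      rw [Finset.mem_inter, hE₁ i]
      constructor
      · rintro ⟨⟨-, hiB, hact⟩, hiS⟩
        exact ⟨hiS, fun hh => hiB (Finset.mem_inter.mp hh).1,
          (extActive1_inter M₁ M₂ wx wy hdisj hcover hsep hiS).mp hact⟩
      · rintro ⟨hiS, hiB, hact⟩
        exact ⟨⟨Finset.mem_univ i, fun hh => hiB (Finset.mem_inter.mpr ⟨hh, hiS⟩),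
          (extActive1_inter M₁ M₂ wx wy hdisj hcover hsep hiS).mpr hact⟩, hiS⟩
    · intro i
      rw [Finset.mem_inter, hE₂ i]
      constructor
      · rintro ⟨⟨-, hiB, hact⟩, hiS⟩
        exact ⟨hiS, fun hh => hiB (Finset.mem_inter.mp hh).1,
          (extActive2_inter M₁ M₂ wx wy hdisj hcover hsep hiS).mp hact⟩
      · rintro ⟨hiS, hiB, hact⟩
        exact ⟨⟨Finset.mem_univ i, fun hh => hiB (Finset.mem_inter.mpr ⟨hh, hiS⟩),
          (extActive2_inter M₁ M₂ wx wy hdisj hcover hsep hiS).mpr hact⟩, hiS⟩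
    · intro i
      rw [Finset.mem_inter, hE₁ i]
      constructor
      · rintro ⟨⟨-, hiB, hact⟩, hiT⟩
        exact ⟨hiT, fun hh => hiB (Finset.mem_inter.mp hh).1,
          (extActive1_inter M₁ M₂ wx wy hdisj.symm hcover' hsep' hiT).mp hact⟩
      · rintro ⟨hiT, hiB, hact⟩
        exact ⟨⟨Finset.mem_univ i, fun hh => hiB (Finset.mem_inter.mpr ⟨hh, hiT⟩),
          (extActive1_inter M₁ M₂ wx wy hdisj.symm hcover' hsep' hiT).mpr hact⟩, hiT⟩
    · intro i
      rw [Finset.mem_inter, hE₂ i]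
      constructor
      · rintro ⟨⟨-, hiB, hact⟩, hiT⟩
        exact ⟨hiT, fun hh => hiB (Finset.mem_inter.mp hh).1,
          (extActive2_inter M₁ M₂ wx wy hdisj.symm hcover' hsep' hiT).mp hact⟩
      · rintro ⟨hiT, hiB, hact⟩
        exact ⟨⟨Finset.mem_univ i, fun hh => hiB (Finset.mem_inter.mpr ⟨hh, hiT⟩),
          (extActive2_inter M₁ M₂ wx wy hdisj.symm hcover' hsep' hiT).mpr hact⟩, hiT⟩
    · have key : ∀ X Y : Finset (Fin n), (X ∩ S ∪ Y ∩ S) ∪ (X ∩ T ∪ Y ∩ T) = X ∪ Y := by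
        intro X Y
        ext a
        have := hmem a
        simp only [Finset.mem_union, Finset.mem_inter]
        tauto
      rw [← key B E₁, ← key B E₂]
      simp only [Finset.image_union]
      ext a
      simp only [Finset.mem_union]
      tauto
  · rintro ⟨F_S, F_T, ⟨B_S, E₁S, E₂S, hBS, hE₁S, hE₂S, rfl⟩,
      ⟨B_T, E₁T, E₂T, hBT, hE₁T, hE₂T, rfl⟩, rfl⟩
    have hsubS : B_S ⊆ S := hBS.1
    have hsubT : B_T ⊆ T := hBT.1
    have hBiS : (B_S ∪ B_T) ∩ S = B_S := by
      rw [Finset.union_inter_distrib_right, Finset.inter_eq_left.mpr hsubS,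
        Finset.disjoint_iff_inter_eq_empty.mp (hdisj.symm.mono_left hsubT),
        Finset.union_empty]
    have hBiT : (B_S ∪ B_T) ∩ T = B_T := by
      rw [Finset.union_inter_distrib_right, Finset.inter_eq_left.mpr hsubT,
        Finset.disjoint_iff_inter_eq_empty.mp (hdisj.mono_left hsubS),
        Finset.empty_union]
    refine ⟨B_S ∪ B_T, E₁S ∪ E₁T, E₂S ∪ E₂T,
      basisOn_union M₁ M₂ hdisj hcover hsep hBS hBT, ?_, ?_, ?_⟩
    · intro i
      rcases hmem i with hiS | hiT
      · have hiT' : i ∉ T := Finset.disjoint_left.mp hdisj hiS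
        have hnE : i ∉ E₁T := fun hh => hiT' ((hE₁T i).mp hh).1
        have hBn : i ∉ B_T := fun hh => hiT' (hsubT hh)
        have hiff : ExtActive1 M₁ M₂ wx wy (B_S ∪ B_T) i ↔
            ExtActive1 M₁ M₂ wx wy B_S i := by
          rw [extActive1_inter M₁ M₂ wx wy hdisj hcover hsep hiS, hBiS]
        rw [Finset.mem_union, hE₁S i, hiff]
        constructor
        · rintro (⟨-, h2, h3⟩ | hh)
          · exact ⟨Finset.mem_univ i, fun hb => (Finset.mem_union.mp hb).elim h2 hBn, h3⟩
          · exact absurd hh hnE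
        · rintro ⟨-, h2, h3⟩
          exact Or.inl ⟨hiS, fun hb => h2 (Finset.mem_union_left _ hb), h3⟩
      · have hiS' : i ∉ S := Finset.disjoint_right.mp hdisj hiT
        have hnE : i ∉ E₁S := fun hh => hiS' ((hE₁S i).mp hh).1
        have hBn : i ∉ B_S := fun hh => hiS' (hsubS hh)
        have hiff : ExtActive1 M₁ M₂ wx wy (B_S ∪ B_T) i ↔
            ExtActive1 M₁ M₂ wx wy B_T i := by
          rw [extActive1_inter M₁ M₂ wx wy hdisj.symm hcover' hsep' hiT, hBiT]
        rw [Finset.mem_union, hE₁T i, hiff]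
        constructor
        · rintro (hh | ⟨-, h2, h3⟩)
          · exact absurd hh hnE
          · exact ⟨Finset.mem_univ i, fun hb => (Finset.mem_union.mp hb).elim hBn h2, h3⟩
        · rintro ⟨-, h2, h3⟩
          exact Or.inr ⟨hiT, fun hb => h2 (Finset.mem_union_right _ hb), h3⟩
    · intro i
      rcases hmem i with hiS | hiT
      · have hiT' : i ∉ T := Finset.disjoint_left.mp hdisj hiS
        have hnE : i ∉ E₂T := fun hh => hiT' ((hE₂T i).mp hh).1
        have hBn : i ∉ B_T := fun hh => hiT' (hsubT hh)
        have hiff : ExtActive2 M₁ M₂ wx wy (B_S ∪ B_T) i ↔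
            ExtActive2 M₁ M₂ wx wy B_S i := by
          rw [extActive2_inter M₁ M₂ wx wy hdisj hcover hsep hiS, hBiS]
        rw [Finset.mem_union, hE₂S i, hiff]
        constructor
        · rintro (⟨-, h2, h3⟩ | hh)
          · exact ⟨Finset.mem_univ i, fun hb => (Finset.mem_union.mp hb).elim h2 hBn, h3⟩
          · exact absurd hh hnE
        · rintro ⟨-, h2, h3⟩
          exact Or.inl ⟨hiS, fun hb => h2 (Finset.mem_union_left _ hb), h3⟩
      · have hiS' : i ∉ S := Finset.disjoint_right.mp hdisj hiT
        have hnE : i ∉ E₂S := fun hh => hiS' ((hE₂S i).mp hh).1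
        have hBn : i ∉ B_S := fun hh => hiS' (hsubS hh)
        have hiff : ExtActive2 M₁ M₂ wx wy (B_S ∪ B_T) i ↔
            ExtActive2 M₁ M₂ wx wy B_T i := by
          rw [extActive2_inter M₁ M₂ wx wy hdisj.symm hcover' hsep' hiT, hBiT]
        rw [Finset.mem_union, hE₂T i, hiff]
        constructor
        · rintro (hh | ⟨-, h2, h3⟩)
          · exact absurd hh hnE
          · exact ⟨Finset.mem_univ i, fun hb => (Finset.mem_union.mp hb).elim hBn h2, h3⟩
        · rintro ⟨-, h2, h3⟩
          exact Or.inr ⟨hiT, fun hb => h2 (Finset.mem_union_right _ hb), h3⟩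
    · simp only [Finset.image_union]
      ext a
      simp only [Finset.mem_union]
      tauto
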